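/- For each m ∈ {0,…,4} and each pair 0 ≤ r < s ≤ 4, the substitution automorphism σ_{T_m} satisfies σ_{T_m}(φ_{rs}) = −φ_{rs} if m ∈ {r,s}, and σ_{T_m}(φ_{rs}) = φ_{rs} if m ∉ {r,s}. -/

import Mathlib

open Matrix Complex MvPolynomial

noncomputable def T : Fin 5 → Matrix (Fin 4) (Fin 4) ℂ :=
  ![!![1,0,0,0; 0,-1,0,0; 0,0,1,0; 0,0,0,-1],
    !![0,I,0,0; -I,0,0,0; 0,0,0,-I; 0,0,I,0],
    !![0,1,0,0; 1,0,0,0; 0,0,0,1; 0,0,1,0],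
    !![0,0,0,1; 0,0,-1,0; 0,-1,0,0; 1,0,0,0],
    !![0,0,0,I; 0,0,-I,0; 0,I,0,0; -I,0,0,0]]

/-- The substitution automorphism `σ_A` of `ℂ[x₁,…,x₄]` with `σ_A(x_j) = Σ_k A j k • x_k`.
Here `x_j` is `X (j-1)` for `j = 1,…,4`. -/
noncomputable def subst (A : Matrix (Fin 4) (Fin 4) ℂ) :
    MvPolynomial (Fin 4) ℂ →ₐ[ℂ] MvPolynomial (Fin 4) ℂ :=
  MvPolynomial.aeval (fun j => ∑ k, MvPolynomial.C (A j k) * MvPolynomial.X k)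

/-- The quadratic forms `φ_{rs}`, indexed by natural numbers `0 ≤ r < s ≤ 4`
(`x_j` is `X (j-1)`); the value is `0` for index pairs not of this shape. -/
noncomputable def phiN : ℕ → ℕ → MvPolynomial (Fin 4) ℂ
  | 0, 1 => -2 * (X 0 * X 3 + X 1 * X 2)
  | 0, 2 => C (2 * I) * (-(X 0 * X 3) + X 1 * X 2)
  | 0, 3 => C (2 * I) * (X 0 * X 1 + X 2 * X 3)
  | 0, 4 => 2 * (-(X 0 * X 1) + X 2 * X 3)
  | 1, 2 => 2 * (X 0 * X 2 - X 1 * X 3)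
  | 1, 3 => -X 0 ^ 2 - X 1 ^ 2 + X 2 ^ 2 + X 3 ^ 2
  | 1, 4 => C I * (X 0 ^ 2 + X 1 ^ 2 + X 2 ^ 2 + X 3 ^ 2)
  | 2, 3 => C I * (-X 0 ^ 2 + X 1 ^ 2 - X 2 ^ 2 + X 3 ^ 2)
  | 2, 4 => X 0 ^ 2 - X 1 ^ 2 - X 2 ^ 2 + X 3 ^ 2
  | 3, 4 => 2 * (X 0 * X 2 + X 1 * X 3)
  | _, _ => 0

noncomputable def phi (r s : Fin 5) : MvPolynomial (Fin 4) ℂ := phiN r.val s.val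

/-
The matrices `T m` satisfy the Clifford relations `T m * T m = 1` and `T m * T n = -(T n * T m)`
for `m ≠ n`, and `(T m)ᵀ * J = J * T m` for a fixed matrix `J = chargeConj`. Each `φ_rs` is, up to
sign, the quadratic form `xᵀ (J T_r T_s) x`, and `σ_A` sends the quadratic form of `M` to that of
`Aᵀ M A`. So `σ_{T_m} φ_rs` is, up to the same sign, the form of
`J (T_m T_r T_m) (T_m T_s T_m)`, and conjugation by `T_m` fixes `T_m` and negates every other `T_n`.
-/

section QuadraticForm

variable {R n : Type*} [CommRing R] [Fintype n]

noncomputable def quadForm (M : Matrix n n R) : MvPolynomial n R :=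
  (fun i => X i) ⬝ᵥ (M.map C *ᵥ fun i => X i)

theorem quadForm_neg (M : Matrix n n R) : quadForm (-M) = -quadForm M := by
  rw [quadForm, quadForm, Matrix.map_neg _ (map_neg C), neg_mulVec, dotProduct_neg]

theorem aeval_linear_quadForm (A M : Matrix n n R) :
    aeval (R := R) (fun j => ∑ k, C (A j k) * X k) (quadForm M) = quadForm (Aᵀ * M * A) := by
  set f := (aeval (R := R) (fun j => ∑ k, C (A j k) * X k)).toRingHom
  have hX : f ∘ (fun i => X i) = A.map C *ᵥ fun i => X i := by
    funext j; simp [f, mulVec, dotProduct]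
  have hC : (M.map C).map f = M.map C := by
    ext i j; simp [f]
  change f _ = _
  rw [quadForm, quadForm, RingHom.map_dotProduct, hX,
    show f ∘ (M.map C *ᵥ fun i => X i) = M.map C *ᵥ (A.map C *ᵥ fun i => X i) by
      funext i; rw [Function.comp_apply, RingHom.map_mulVec, hC, hX],
    Matrix.map_mul, Matrix.map_mul, transpose_map, ← mulVec_mulVec, ← mulVec_mulVec,
    dotProduct_mulVec _ (A.map C)ᵀ, vecMul_transpose]

end QuadraticForm

section Involution

variable {α : Type*} [Ring α] {a : α}

theorem mul_mul_mul_eq_of_mul_self_eq_one (ha : a * a = 1) (b c : α) :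
    a * (b * c) * a = (a * b * a) * (a * c * a) := by
  simp only [mul_assoc, ← mul_assoc a a, ha, one_mul]

theorem mul_mul_self_eq_neg_of_anticomm (ha : a * a = 1) {b : α} (hab : a * b = -(b * a)) :
    a * b * a = -b := by
  rw [hab, neg_mul, mul_assoc, ha, mul_one]

end Involution

theorem T_mul_self (m : Fin 5) : T m * T m = 1 := by
  fin_cases m <;> ext i j <;> fin_cases i <;> fin_cases j <;> simp [T, mul_apply, Fin.sum_univ_four]

theorem T_anticomm {m n : Fin 5} (h : m ≠ n) : T m * T n = -(T n * T m) := by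
  fin_cases m <;> fin_cases n <;> first
    | exact absurd rfl h
    | simp [T, Matrix.cons_mul, Matrix.vecMul_cons]

theorem T_mul_T_mul_T (m n : Fin 5) : T m * T n * T m = if m = n then T n else -T n := by
  split_ifs with h
  · rw [h, T_mul_self, one_mul]
  · exact mul_mul_self_eq_neg_of_anticomm (T_mul_self m) (T_anticomm h)

noncomputable def chargeConj : Matrix (Fin 4) (Fin 4) ℂ :=
  !![0,0,-I,0; 0,0,0,-I; I,0,0,0; 0,I,0,0]

theorem transpose_T_mul_chargeConj (m : Fin 5) : (T m)ᵀ * chargeConj = chargeConj * T m := by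
  fin_cases m <;> ext i j <;> fin_cases i <;> fin_cases j <;>
    simp [T, chargeConj, mul_apply, Fin.sum_univ_four]

theorem exists_phi_eq_smul_quadForm {r s : Fin 5} (h : r < s) :
    ∃ c : ℂ, phi r s = c • quadForm (chargeConj * (T r * T s)) := by
  fin_cases r <;> fin_cases s <;> (try exact absurd h (by decide)) <;>
    simp [phi, phiN, quadForm, chargeConj, T, Matrix.cons_mul, Matrix.vecMul_cons, dotProduct,
      Fin.sum_univ_four, mulVec, map_ofNat C 2] <;>
    first
    | (use 1; simp only [one_smul]; ring1)
    | (use -1; simp only [neg_smul, one_smul]; ring1)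

theorem subst_T_quadForm_chargeConj (m : Fin 5) (M : Matrix (Fin 4) (Fin 4) ℂ) :
    subst (T m) (quadForm (chargeConj * M)) = quadForm (chargeConj * (T m * M * T m)) := by
  rw [subst, aeval_linear_quadForm, ← Matrix.mul_assoc, transpose_T_mul_chargeConj,
    Matrix.mul_assoc, Matrix.mul_assoc, Matrix.mul_assoc]

/-- `σ_{T m}(φ_{rs}) = -φ_{rs}` if `m ∈ {r,s}` and `σ_{T m}(φ_{rs}) = φ_{rs}` if
`m ∉ {r,s}`. -/
theorem stmt7 (m r s : Fin 5) (h : r < s) :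
    ((m = r ∨ m = s) → subst (T m) (phi r s) = -phi r s) ∧
    ((m ≠ r ∧ m ≠ s) → subst (T m) (phi r s) = phi r s) := by
  obtain ⟨c, hc⟩ := exists_phi_eq_smul_quadForm h
  have hσ : subst (T m) (phi r s) =
      c • quadForm (chargeConj * ((T m * T r * T m) * (T m * T s * T m))) := by
    rw [hc, map_smul, subst_T_quadForm_chargeConj, mul_mul_mul_eq_of_mul_self_eq_one (T_mul_self m)]
  have hrs : r ≠ s := h.ne
  refine ⟨?_, fun ⟨hmr, hms⟩ => ?_⟩
  · rintro (rfl | rfl)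
    · rw [hσ, hc, T_mul_T_mul_T, T_mul_T_mul_T, if_pos rfl, if_neg hrs, Matrix.mul_neg,
        Matrix.mul_neg, quadForm_neg, smul_neg]
    · rw [hσ, hc, T_mul_T_mul_T, T_mul_T_mul_T, if_pos rfl, if_neg hrs.symm, Matrix.neg_mul,
        Matrix.mul_neg, quadForm_neg, smul_neg]
  · rw [hσ, hc, T_mul_T_mul_T, T_mul_T_mul_T, if_neg hmr, if_neg hms, neg_mul_neg]
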